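/- If an Ł-formula φ (built from variables, ⊥, and ⊃) is not valid in [-1,0]_Ł, then its material translation into lattice-ordered abelian group terms is not valid over ℚ: given a valuation v into [-1,0] with v(φ) < 0, the valuation v' over ℚ defined by v'(⊥) = -1 and v'(p) = v(p) satisfies, for every subformula ψ: if v(ψ) < 0 then v'(ψᵐ) = v(ψ), and if v(ψ) = 0 then v'(ψᵐ) ≥ 0, where ψᵐ is ψ with each ⊃ replaced by the material implication a ⊃ᵐ b = -(0 ⊓ a) + (b ⊔ v'(⊥)). -/
import Mathlib


/-- Formulas of Łukasiewicz logic built from propositional variables, `⊥`,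
and the implication `⊃`. -/
inductive LForm : Type
  | var : ℕ → LForm
  | bot : LForm
  | imp : LForm → LForm → LForm

/-- Evaluation in the MV-algebra `[-1,0]_Ł`: `⊥ = -1`, `a ⊃ b = min 0 (b - a)`. -/
noncomputable def evalL (v : ℕ → ℝ) : LForm → ℝ
  | .var n => v n
  | .bot => -1
  | .imp a b => min 0 (evalL v b - evalL v a)

/-- Material evaluation: `⊥` is treated as a variable (value `q`), and
`A ⊃ᵐ B` is interpreted as `-(0 ⊓ A) + (B ⊔ q)`. -/
noncomputable def evalM (w : ℕ → ℝ) (q : ℝ) : LForm → ℝ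
  | .var n => w n
  | .bot => q
  | .imp a b => -(min 0 (evalM w q a)) + max (evalM w q b) q

lemma evalL_range (v : ℕ → ℝ) (hv : ∀ n, v n ∈ Set.Icc (-1:ℝ) 0) (ψ : LForm) :
    evalL v ψ ∈ Set.Icc (-1:ℝ) 0 := by
  induction ψ with
  | var n => exact hv n
  | bot => simp [evalL]
  | imp a b iha ihb =>
    simp only [evalL, Set.mem_Icc] at *
    constructor
    · have : (-1:ℝ) ≤ evalL v b - evalL v a := by linarith [iha.1, iha.2, ihb.1, ihb.2]
      exact le_min (by norm_num) this
    · exact min_le_left _ _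

lemma key (v : ℕ → ℝ) (hv : ∀ n, v n ∈ Set.Icc (-1:ℝ) 0) (ψ : LForm) :
    (evalL v ψ < 0 → evalM v (-1) ψ = evalL v ψ) ∧
    (evalL v ψ = 0 → 0 ≤ evalM v (-1) ψ) := by
  induction ψ with
  | var n => exact ⟨fun _ => rfl, fun h => h.ge⟩
  | bot => simp [evalL, evalM]
  | imp a b iha ihb =>
    have ha := evalL_range v hv a
    have hb := evalL_range v hv b
    simp only [Set.mem_Icc] at ha hb
    simp only [evalL, evalM]
    rcases lt_or_eq_of_le ha.2 with hA | hA
    · have hMa : evalM v (-1) a = evalL v a := iha.1 hA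
      rw [hMa, min_eq_right ha.2]
      rcases lt_or_eq_of_le hb.2 with hB | hB
      · have hMb : evalM v (-1) b = evalL v b := ihb.1 hB
        rw [hMb, max_eq_left hb.1]
        constructor
        · intro h
          have hd : evalL v b - evalL v a < 0 := by
            by_contra hc
            push_neg at hc
            rw [min_eq_left hc] at h
            linarith
          rw [min_eq_right hd.le]
          ring
        · intro h
          have h2 := min_le_right (0:ℝ) (evalL v b - evalL v a)
          rw [h] at h2
          linarith
      · have hMb : 0 ≤ evalM v (-1) b := ihb.2 hB
        have hmax : (0:ℝ) ≤ max (evalM v (-1) b) (-1) := le_trans hMb (le_max_left _ _)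
        constructor
        · intro h
          exfalso
          rw [hB, min_eq_left (by linarith)] at h
          linarith
        · intro _
          linarith
    · have hMa : 0 ≤ evalM v (-1) a := iha.2 hA
      rw [min_eq_left hMa, hA, sub_zero, min_eq_right hb.2]
      rcases lt_or_eq_of_le hb.2 with hB | hB
      · have hMb : evalM v (-1) b = evalL v b := ihb.1 hB
        rw [hMb, max_eq_left hb.1]
        exact ⟨fun _ => by ring, fun h => by linarith⟩
      · have hMb : 0 ≤ evalM v (-1) b := ihb.2 hB
        have hmax : (0:ℝ) ≤ max (evalM v (-1) b) (-1) := le_trans hMb (le_max_left _ _)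
        exact ⟨fun h => absurd h (by rw [hB]; exact lt_irrefl 0), fun _ => by linarith⟩

/-- If `φ` is refuted in `[-1,0]_Ł` by `v`, then the valuation `v'` over the
abelian l-group (with `v'(⊥) = -1` and `v'(p) = v(p)`) satisfies the
two-case invariant on every formula `ψ`: if `v(ψ) < 0` then `v'(ψᵐ) = v(ψ)`,
and if `v(ψ) = 0` then `v'(ψᵐ) ≥ 0`; in particular `v'(φᵐ) < 0`. -/
theorem stmt_18 (φ : LForm) (v : ℕ → ℝ) (hv : ∀ n, v n ∈ Set.Icc (-1:ℝ) 0)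
    (hφ : evalL v φ < 0) :
    (∀ ψ : LForm,
      (evalL v ψ < 0 → evalM v (-1) ψ = evalL v ψ) ∧
      (evalL v ψ = 0 → 0 ≤ evalM v (-1) ψ)) ∧
    evalM v (-1) φ < 0 := by
  refine ⟨fun ψ => key v hv ψ, ?_⟩
  have := (key v hv φ).1 hφ
  linarith
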